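/- arXiv:1411.0782 — 2 statements merged into one kernel-verified Lean document; each statement's English description precedes it below -/
import Mathlib

section
/- Let b be the branching factor of a CRN and let w, w_max be integers with (w+1)·b ≤ w_max. If the CRN has no undecomposable semiformal pathway of width strictly greater than w and at most w_max, then it has no undecomposable semiformal pathway of width strictly greater than w at all. -/
namespace CRNVerif

variable {σ : Type} [DecidableEq σ]

/-- A state is a multiset of species. -/
abbrev State (σ : Type) := Multiset σ
/-- A reaction is a pair (reactants, products) of multisets of species. -/
abbrev Reaction (σ : Type) := Multiset σ × Multiset σ
/-- A pathway is a finite sequence of reactions. -/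
abbrev Pathway (σ : Type) := List (Reaction σ)

/-- Result of applying reaction `r` in state `S` (i.e. `S ⊕ r`). -/
def applyRxn (S : State σ) (r : Reaction σ) : State σ := S - r.1 + r.2

/-- Minimal initial state of a pathway: the smallest state in which
its reactions can occur in succession. -/
def minInit : Pathway σ → State σ
  | [] => 0
  | r :: p => r.1 + (minInit p - r.2)

/-- State reached from `S` after performing all reactions of `p` in order. -/
def finalFrom (S : State σ) : Pathway σ → State σ
  | [] => S
  | r :: p => finalFrom (applyRxn S r) p

/-- The final state of a pathway (starting from its minimal initial state). -/
def finalState (p : Pathway σ) : State σ := finalFrom (minInit p) p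

/-- The state `S_i` after the first `i` reactions, starting from the minimal initial state. -/
def stateAt (p : Pathway σ) (i : ℕ) : State σ := finalFrom (minInit p) (p.take i)

/-- A state is formal if it contains only formal species (as given by `fm`). -/
def FormalState (fm : σ → Bool) (S : State σ) : Prop := ∀ x ∈ S, fm x = true

/-- `Formal(S)`: the multiset obtained by removing all intermediate species from `S`. -/
def formalPart (fm : σ → Bool) (S : State σ) : State σ := S.filter (fun x => fm x = true)

/-- A reaction is trivial if reactants equal products. -/
def TrivialRxn (r : Reaction σ) : Prop := r.1 = r.2

/-- A CRN is a (finite) set of nontrivial reactions. -/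
def NontrivialRxns (C : Finset (Reaction σ)) : Prop := ∀ r ∈ C, ¬ TrivialRxn r

/-- A formal CRN contains only formal reactions. -/
def IsFormalCRN (fm : σ → Bool) (C : Finset (Reaction σ)) : Prop :=
  ∀ r ∈ C, FormalState fm r.1 ∧ FormalState fm r.2

/-- `p` is a pathway of the CRN `C`. -/
def PathwayOf (C : Finset (Reaction σ)) (p : Pathway σ) : Prop := ∀ r ∈ p, r ∈ C

/-- `Interleave l₁ l₂ l`: `l` can be partitioned into the two (order-preserving,
not necessarily contiguous) subsequences `l₁` and `l₂`. -/
inductive Interleave {α : Type u} : List α → List α → List α → Prop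
  | nil : Interleave [] [] []
  | left {a : α} {l₁ l₂ l : List α} : Interleave l₁ l₂ l → Interleave (a :: l₁) l₂ (a :: l)
  | right {a : α} {l₁ l₂ l : List α} : Interleave l₁ l₂ l → Interleave l₁ (a :: l₂) (a :: l)

/-- `InterleaveMany qs p`: `p` is generated by interleaving the lists in `qs`. -/
inductive InterleaveMany {α : Type u} : List (List α) → List α → Prop
  | nil : InterleaveMany [] []
  | cons {q r p : List α} {qs : List (List α)} :
      Interleave q r p → InterleaveMany qs r → InterleaveMany (q :: qs) p

/-- A pathway is semiformal if its minimal initial state is formal. -/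
def Semiformal (fm : σ → Bool) (p : Pathway σ) : Prop := FormalState fm (minInit p)

/-- A formal pathway: a (nonempty) pathway whose minimal initial state and
final state are both formal. -/
def FormalPathway (fm : σ → Bool) (p : Pathway σ) : Prop :=
  p ≠ [] ∧ FormalState fm (minInit p) ∧ FormalState fm (finalState p)

/-- A formal pathway is decomposable if it can be partitioned into two nonempty
subsequences that are each formal pathways. -/
def FDecomposable (fm : σ → Bool) (p : Pathway σ) : Prop :=
  ∃ q₁ q₂, q₁ ≠ [] ∧ q₂ ≠ [] ∧ Interleave q₁ q₂ p ∧
    FormalPathway fm q₁ ∧ FormalPathway fm q₂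

/-- A prime formal pathway is a formal pathway that is not decomposable. -/
def PrimePathway (fm : σ → Bool) (p : Pathway σ) : Prop :=
  FormalPathway fm p ∧ ¬ FDecomposable fm p

/-- The formal basis: the set of (initial state, final state) pairs of prime
formal pathways of `C`. -/
def formalBasis (fm : σ → Bool) (C : Finset (Reaction σ)) : Set (Reaction σ) :=
  { r | ∃ p, PathwayOf C p ∧ PrimePathway fm p ∧ r = (minInit p, finalState p) }

/-- Two sets of reactions are equal up to addition/removal of trivial reactions. -/
def EqUpToTrivial (A B : Set (Reaction σ)) : Prop :=
  {r ∈ A | ¬ TrivialRxn r} = {r ∈ B | ¬ TrivialRxn r}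

/-- The reaction at (0-based) index `j` of `p` is a turning point:
before it only formal species of the initial state appear, from it on only formal
species of the final state appear, and at the moment the turning point fires,
no formal species are left over. -/
def TurningAt (fm : σ → Bool) (p : Pathway σ) (j : ℕ) : Prop :=
  ∃ h : j < p.length,
    (∀ i ≤ j, formalPart fm (stateAt p i) ≤ minInit p) ∧
    (∀ i, j < i → i ≤ p.length → formalPart fm (stateAt p i) ≤ finalState p) ∧
    formalPart fm (stateAt p j - (p.get ⟨j, h⟩).1) = 0

/-- A regular formal pathway: one that implements a formal reaction,
i.e. has a turning point. -/
def RegularPathway (fm : σ → Bool) (p : Pathway σ) : Prop :=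
  FormalPathway fm p ∧ ∃ j, TurningAt fm p j

/-- A CRN is regular if every prime formal pathway is regular. -/
def RegularCRN (fm : σ → Bool) (C : Finset (Reaction σ)) : Prop :=
  ∀ p, PathwayOf C p → PrimePathway fm p → RegularPathway fm p

/-- `q` is a strong closing pathway for `p` (within CRN `C`): it can occur in the
final state of `p`, consumes no formal species, and leads back to a formal state. -/
def ClosingPathway (fm : σ → Bool) (C : Finset (Reaction σ)) (p q : Pathway σ) : Prop :=
  PathwayOf C q ∧ minInit q ≤ finalState p ∧ (∀ r ∈ q, formalPart fm r.1 = 0) ∧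
  FormalState fm (finalFrom (finalState p) q)

/-- A CRN is strongly tidy if every semiformal pathway has a strong closing pathway. -/
def StronglyTidy (fm : σ → Bool) (C : Finset (Reaction σ)) : Prop :=
  ∀ p, PathwayOf C p → Semiformal fm p → ∃ q, ClosingPathway fm C p q

/-- A semiformal pathway is decomposable if it can be partitioned into two
nonempty subsequences that are each semiformal. -/
def SDecomposable (fm : σ → Bool) (p : Pathway σ) : Prop :=
  ∃ q₁ q₂, q₁ ≠ [] ∧ q₂ ≠ [] ∧ Interleave q₁ q₂ p ∧ Semiformal fm q₁ ∧ Semiformal fm q₂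

/-- The width of a pathway: the maximum size of the states it passes through. -/
def width (p : Pathway σ) : ℕ :=
  ((List.range (p.length + 1)).map (fun i => Multiset.card (stateAt p i))).foldr max 0

/-- The branching factor of a CRN. -/
def branching (C : Finset (Reaction σ)) : ℕ :=
  C.sup (fun r => max (Multiset.card r.1) (Multiset.card r.2))

/-- Formal state `T` is reachable from `S` via reactions of `C`. -/
def Reachable (C : Finset (Reaction σ)) (S T : State σ) : Prop :=
  ∃ p, PathwayOf C p ∧ minInit p ≤ S ∧ finalFrom S p = T

/-- `C` and `C'` share no intermediate species: any species occurring in both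
CRNs is formal. -/
def NoSharedIntermediates (fm : σ → Bool) (C C' : Finset (Reaction σ)) : Prop :=
  ∀ r ∈ C, ∀ r' ∈ C', ∀ x : σ, x ∈ r.1 + r.2 → x ∈ r'.1 + r'.2 → fm x = true

/-- The formal closure of a pathway: the minimal state containing the formal part
of every state along the pathway. -/
def formalClosure (fm : σ → Bool) (p : Pathway σ) : State σ :=
  ((List.range (p.length + 1)).map (fun i => formalPart fm (stateAt p i))).foldr (· ∪ ·) 0

/-- The decomposed final states of a semiformal pathway: all pairs of final
states arising from decompositions into two (nonempty) semiformal pathways. -/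
def DFS (fm : σ → Bool) (p : Pathway σ) : Set (State σ × State σ) :=
  { T | ∃ q₁ q₂, q₁ ≠ [] ∧ q₂ ≠ [] ∧ Interleave q₁ q₂ p ∧
        Semiformal fm q₁ ∧ Semiformal fm q₂ ∧ T = (finalState q₁, finalState q₂) }

/-- The minimal state containing the formal parts of all states strictly after index `j`. -/
def rfsAt (fm : σ → Bool) (p : Pathway σ) (j : ℕ) : State σ :=
  (((List.range (p.length + 1)).filter (fun i => j < i)).map
      (fun i => formalPart fm (stateAt p i))).foldr (· ∪ ·) 0

/-- The regular final states of a pathway: the minimal states `T` witnessed by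
potential turning point reactions. -/
def RFS (fm : σ → Bool) (p : Pathway σ) : Set (State σ) :=
  { T | ∃ j, ∃ h : j < p.length,
      (∀ i ≤ j, formalPart fm (stateAt p i) ≤ minInit p) ∧
      formalPart fm (stateAt p j - (p.get ⟨j, h⟩).1) = 0 ∧
      T = rfsAt fm p j }

/-- The signature of a semiformal pathway: (initial state, final state, width,
formal closure, DFS, RFS). -/
def signature (fm : σ → Bool) (p : Pathway σ) :
    State σ × State σ × ℕ × State σ × Set (State σ × State σ) × Set (State σ) :=
  (minInit p, finalState p, width p, formalClosure fm p, DFS fm p, RFS fm p)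

/-- An annotated prime pathway: exactly its chosen turning point is annotated,
with the corresponding formal basis reaction. -/
def GoodAnnotation (fm : σ → Bool) (ap : List (Reaction σ × Option (Reaction σ))) : Prop :=
  PrimePathway fm (ap.map Prod.fst) ∧
  ∃ j, TurningAt fm (ap.map Prod.fst) j ∧
    ap.map Prod.snd = (List.range ap.length).map
      (fun i => if i = j then
          some (minInit (ap.map Prod.fst), finalState (ap.map Prod.fst)) else none)

/-- `p` can be interpreted as `q`: `q` can occur in the initial state of `p`, has
the same net effect, and there is a decomposition of `p` into prime formal pathways
such that replacing a chosen turning point of each by the corresponding formal basis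
element and removing all other reactions yields `q`. -/
def Interpreted (fm : σ → Bool) (p q : Pathway σ) : Prop :=
  minInit q ≤ minInit p ∧
  finalFrom (minInit p) q = finalState p ∧
  ∃ ap : List (Reaction σ × Option (Reaction σ)),
    ap.map Prod.fst = p ∧ (ap.map Prod.snd).reduceOption = q ∧
    ∃ aps, InterleaveMany aps ap ∧ ∀ a ∈ aps, GoodAnnotation fm a

end CRNVerif

/-!
Induct on the length of an undecomposable semiformal pathway `p ++ [r]`. Split `p` into
undecomposable semiformal components; each is shorter, so has width at most `w`. Dropping any
one component `q` leaves a semiformal pathway `rest`, and `rest ++ [r]` cannot be semiformal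
(else `q`, `rest ++ [r]` would decompose `p ++ [r]`): each component supplies `r` with an
intermediate species the others cannot. Hence there are at most `b` components, so
`width (p ++ [r]) ≤ b * w + b ≤ w_max`, and the hypothesis forbids `w < width (p ++ [r])`.
-/

namespace Multiset

variable {ι α : Type*} [DecidableEq α]

theorem exists_le_card_le_le_sum_map (f : ι → Multiset α) {A : Multiset α} {S : Multiset ι}
    (h : A ≤ (S.map f).sum) : ∃ T ≤ S, card T ≤ card A ∧ A ≤ (T.map f).sum := by
  induction S using Multiset.induction_on generalizing A with
  | empty => exact ⟨0, le_rfl, by simp, by simpa using h⟩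
  | cons i S ih =>
    rw [map_cons, sum_cons] at h
    obtain ⟨T, hTS, hcard, hA⟩ := ih (A := A - f i) (tsub_le_iff_left.2 h)
    by_cases hlt : card (A - f i) < card A
    · refine ⟨i ::ₘ T, cons_le_cons i hTS, by simp; omega, ?_⟩
      rw [map_cons, sum_cons]
      exact tsub_le_iff_left.1 hA
    · have hA' : A - f i = A := eq_of_le_of_card_le tsub_le_self (not_lt.1 hlt)
      rw [hA'] at hcard hA
      exact ⟨T, hTS.trans (le_cons_self S i), hcard, hA⟩

theorem card_le_card_of_forall_not_le_sum_map_erase [DecidableEq ι] (f : ι → Multiset α)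
    {A : Multiset α} {S : Multiset ι} (h : A ≤ (S.map f).sum)
    (hS : ∀ i ∈ S, ¬ A ≤ ((S.erase i).map f).sum) : card S ≤ card A := by
  obtain ⟨T, hTS, hcard, hA⟩ := exists_le_card_le_le_sum_map f h
  obtain rfl | hlt := hTS.eq_or_lt
  · exact hcard
  obtain ⟨i, hi⟩ := lt_iff_cons_le.1 hlt
  obtain ⟨U, hU⟩ := le_iff_exists_add.1 (by simpa using erase_le_erase i hi : T ≤ S.erase i)
  refine absurd (hA.trans ?_) (hS i (mem_of_le hi (mem_cons_self i T)))
  rw [hU, map_add, sum_add]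
  exact le_self_add

end Multiset

namespace CRNVerif

section Generic

variable {α : Type*}

theorem Interleave.symm {l₁ l₂ l : List α} (h : Interleave l₁ l₂ l) : Interleave l₂ l₁ l := by
  induction h with
  | nil => exact .nil
  | left _ ih => exact .right ih
  | right _ ih => exact .left ih

theorem Interleave.length_eq {l₁ l₂ l : List α} (h : Interleave l₁ l₂ l) :
    l.length = l₁.length + l₂.length := by
  induction h with
  | nil => rfl
  | left _ ih => simp [ih]; omega
  | right _ ih => simp [ih]; omega

theorem interleave_nil_left (l : List α) : Interleave [] l l := by
  induction l with
  | nil => exact .nil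
  | cons _ _ ih => exact .right ih

theorem Interleave.eq_of_nil_left {l₂ l : List α} (h : Interleave [] l₂ l) : l = l₂ := by
  generalize hl₁ : ([] : List α) = l₁ at h
  induction h with
  | nil => rfl
  | left _ _ => cases hl₁
  | right _ ih => exact congrArg _ (ih hl₁)

theorem Interleave.subset_left {l₁ l₂ l : List α} (h : Interleave l₁ l₂ l) : l₁ ⊆ l := by
  induction h with
  | nil => exact List.Subset.refl _
  | left _ ih => exact List.cons_subset_cons _ ih
  | right _ ih => exact List.Subset.trans ih (List.subset_cons_self _ _)

theorem Interleave.assoc {l₁ l₂ l₁₂ l₃ l : List α} (h₁₂ : Interleave l₁ l₂ l₁₂)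
    (h : Interleave l₁₂ l₃ l) : ∃ l₂₃, Interleave l₂ l₃ l₂₃ ∧ Interleave l₁ l₂₃ l := by
  induction h generalizing l₁ l₂ with
  | nil =>
    cases h₁₂
    exact ⟨[], .nil, .nil⟩
  | @left a _ _ _ _ ih =>
    cases h₁₂ with
    | left h₁₂ =>
      obtain ⟨l₂₃, h₂₃, h'⟩ := ih h₁₂
      exact ⟨l₂₃, h₂₃, .left h'⟩
    | right h₁₂ =>
      obtain ⟨l₂₃, h₂₃, h'⟩ := ih h₁₂
      exact ⟨a :: l₂₃, .left h₂₃, .right h'⟩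
  | @right a _ _ _ _ ih =>
    obtain ⟨l₂₃, h₂₃, h'⟩ := ih h₁₂
    exact ⟨a :: l₂₃, .right h₂₃, .right h'⟩

theorem Interleave.append_singleton {l₁ l₂ l : List α} (h : Interleave l₁ l₂ l) (a : α) :
    Interleave l₁ (l₂ ++ [a]) (l ++ [a]) := by
  induction h with
  | nil => exact .right .nil
  | left _ ih => exact .left ih
  | right _ ih => exact .right ih

theorem Interleave.exists_take {l₁ l₂ l : List α} (h : Interleave l₁ l₂ l) (i : ℕ) :
    ∃ i₁ i₂, Interleave (l₁.take i₁) (l₂.take i₂) (l.take i) := by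
  induction h generalizing i with
  | nil => exact ⟨0, 0, by simpa using Interleave.nil⟩
  | left _ ih =>
    cases i with
    | zero => exact ⟨0, 0, by simpa using Interleave.nil⟩
    | succ i =>
      obtain ⟨i₁, i₂, h⟩ := ih i
      exact ⟨i₁ + 1, i₂, by simpa using Interleave.left h⟩
  | right _ ih =>
    cases i with
    | zero => exact ⟨0, 0, by simpa using Interleave.nil⟩
    | succ i =>
      obtain ⟨i₁, i₂, h⟩ := ih i
      exact ⟨i₁, i₂ + 1, by simpa using Interleave.right h⟩

theorem InterleaveMany.subset {ls : List (List α)} {l l' : List α} (h : InterleaveMany ls l)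
    (hl' : l' ∈ ls) : l' ⊆ l := by
  induction h with
  | nil => simp at hl'
  | cons hi _ ih =>
    rcases List.mem_cons.1 hl' with rfl | hl'
    · exact hi.subset_left
    · exact List.Subset.trans (ih hl') hi.symm.subset_left

theorem InterleaveMany.length_le {ls : List (List α)} {l l' : List α} (h : InterleaveMany ls l)
    (hl' : l' ∈ ls) : l'.length ≤ l.length := by
  induction h with
  | nil => simp at hl'
  | cons hi _ ih =>
    have := hi.length_eq
    rcases List.mem_cons.1 hl' with rfl | hl'
    · omega
    · have := ih hl'; omega

theorem InterleaveMany.append {ls₁ ls₂ : List (List α)} {l₁ l₂ l : List α}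
    (h₁ : InterleaveMany ls₁ l₁) (h₂ : InterleaveMany ls₂ l₂) (h : Interleave l₁ l₂ l) :
    InterleaveMany (ls₁ ++ ls₂) l := by
  induction h₁ generalizing l with
  | nil => rwa [h.eq_of_nil_left]
  | cons hi _ ih =>
    obtain ⟨l', h', hl'⟩ := hi.assoc h
    exact .cons hl' (ih h')

theorem InterleaveMany.exists_interleave_of_eq_append {ls₁ ls₂ : List (List α)} {l l' : List α}
    (h : InterleaveMany (ls₁ ++ l' :: ls₂) l) :
    ∃ rest, Interleave l' rest l ∧ InterleaveMany (ls₁ ++ ls₂) rest := by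
  induction ls₁ generalizing l with
  | nil =>
    obtain _ | ⟨hi, hr⟩ := h
    exact ⟨_, hi, hr⟩
  | cons a ls₁ ih =>
    obtain _ | ⟨hi, hr⟩ := h
    obtain ⟨rest, hrest, hrest'⟩ := ih hr
    obtain ⟨rest₂, h₂, h'⟩ := hrest.assoc hi.symm
    exact ⟨rest₂, h', .cons h₂.symm hrest'⟩

end Generic

section Formal

variable {σ : Type} {fm : σ → Bool}

def intermediatePart (fm : σ → Bool) (S : State σ) : State σ := S.filter (fun x => fm x = false)

theorem card_intermediatePart_le (S : State σ) :
    Multiset.card (intermediatePart fm S) ≤ Multiset.card S :=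
  Multiset.card_le_card (Multiset.filter_le _ _)

theorem FormalState.mono {S T : State σ} (h : S ≤ T) (hT : FormalState fm T) :
    FormalState fm S := fun x hx => hT x (Multiset.mem_of_le h hx)

theorem formalState_add_iff {S T : State σ} :
    FormalState fm (S + T) ↔ FormalState fm S ∧ FormalState fm T := by
  simp only [FormalState, Multiset.mem_add, or_imp, forall_and]

theorem max_card_le_branching {C : Finset (Reaction σ)} {r : Reaction σ} (hr : r ∈ C) :
    max (Multiset.card r.1) (Multiset.card r.2) ≤ branching C :=
  Finset.le_sup (f := fun r => max (Multiset.card r.1) (Multiset.card r.2)) hr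

end Formal

section Pathways

variable {σ : Type} [DecidableEq σ] {fm : σ → Bool}

theorem formalState_sub_iff {S T : State σ} :
    FormalState fm (S - T) ↔ intermediatePart fm S ≤ T := by
  simp only [FormalState, intermediatePart, Multiset.le_iff_count, Multiset.count_filter,
    ← Multiset.count_pos, Multiset.count_sub]
  refine forall_congr' fun x => ?_
  cases fm x <;> simp

theorem intermediatePart_le_of_le_add {S T D : State σ} (h : intermediatePart fm S ≤ T + D)
    (hD : FormalState fm D) : intermediatePart fm S ≤ T := by
  rw [Multiset.le_iff_count] at h ⊢
  intro x
  have hx := h x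
  rw [Multiset.count_add] at hx
  by_cases hfx : fm x = true
  · simp [intermediatePart, hfx]
  · have : Multiset.count x D = 0 := Multiset.count_eq_zero.2 fun hxD => hfx (hD x hxD)
    omega

theorem le_of_minInit_cons_le {r : Reaction σ} {p : Pathway σ} {S : State σ}
    (h : minInit (r :: p) ≤ S) : r.1 ≤ S :=
  le_trans (le_add_right le_rfl) h

theorem minInit_le_applyRxn_of_minInit_cons_le {r : Reaction σ} {p : Pathway σ} {S : State σ}
    (h : minInit (r :: p) ≤ S) : minInit p ≤ applyRxn S r :=
  calc minInit p ≤ minInit p - r.2 + r.2 := le_tsub_add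
    _ ≤ S - r.1 + r.2 := add_le_add_left (le_tsub_of_add_le_left h) _

theorem applyRxn_add {S : State σ} {r : Reaction σ} (T : State σ) (h : r.1 ≤ S) :
    applyRxn (S + T) r = applyRxn S r + T := by
  rw [applyRxn, applyRxn, ← tsub_add_eq_add_tsub h, add_right_comm]

theorem finalFrom_add {p : Pathway σ} {S : State σ} (T : State σ) (h : minInit p ≤ S) :
    finalFrom (S + T) p = finalFrom S p + T := by
  induction p generalizing S with
  | nil => rfl
  | cons r p ih =>
    rw [finalFrom, applyRxn_add T (le_of_minInit_cons_le h)]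
    exact ih (minInit_le_applyRxn_of_minInit_cons_le h)

theorem finalFrom_append (S : State σ) (p q : Pathway σ) :
    finalFrom S (p ++ q) = finalFrom (finalFrom S p) q := by
  induction p generalizing S with
  | nil => rfl
  | cons r p ih => simp [finalFrom, ih]

theorem minInit_take_le (p : Pathway σ) (i : ℕ) : minInit (p.take i) ≤ minInit p := by
  induction p generalizing i with
  | nil => simp
  | cons r p ih =>
    cases i with
    | zero => simp [minInit]
    | succ i => exact add_le_add_right (tsub_le_tsub_right (ih i) _) _

theorem finalFrom_take_eq_stateAt_add {p : Pathway σ} {S : State σ} (h : minInit p ≤ S)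
    (i : ℕ) : finalFrom S (p.take i) = stateAt p i + (S - minInit p) := by
  conv_lhs => rw [← add_tsub_cancel_of_le h]
  exact finalFrom_add _ (minInit_take_le p i)

theorem stateAt_of_length_le {p : Pathway σ} {i : ℕ} (h : p.length ≤ i) :
    stateAt p i = finalState p := by
  rw [stateAt, List.take_of_length_le h, finalState]

theorem finalFrom_eq_finalState_add {p : Pathway σ} {S : State σ} (h : minInit p ≤ S) :
    finalFrom S p = finalState p + (S - minInit p) := by
  simpa [stateAt_of_length_le] using finalFrom_take_eq_stateAt_add h p.length

theorem finalState_cons (r : Reaction σ) (p : Pathway σ) :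
    finalState (r :: p) = finalState p + (r.2 - minInit p) := by
  have hr : applyRxn (minInit (r :: p)) r = minInit p + (r.2 - minInit p) := by
    ext x
    simp only [applyRxn, minInit, Multiset.count_add, Multiset.count_sub]
    omega
  rw [finalState, finalFrom, hr, finalFrom_add _ le_rfl, finalState]

theorem minInit_append_singleton (p : Pathway σ) (r : Reaction σ) :
    minInit (p ++ [r]) = minInit p + (r.1 - finalState p) := by
  induction p with
  | nil => simp [minInit, finalState, finalFrom]
  | cons s p ih =>
    simp only [List.cons_append, minInit, ih, finalState_cons]
    ext x
    simp only [Multiset.count_add, Multiset.count_sub]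
    omega

theorem finalState_append_singleton (p : Pathway σ) (r : Reaction σ) :
    finalState (p ++ [r]) = applyRxn (finalState p) r := by
  rw [finalState, finalFrom_append, minInit_append_singleton, finalFrom_add _ le_rfl,
    ← finalState]
  ext x
  simp only [finalFrom, applyRxn, Multiset.count_add, Multiset.count_sub]
  omega

theorem stateAt_append_singleton_of_le {p : Pathway σ} (r : Reaction σ) {i : ℕ}
    (hi : i ≤ p.length) : stateAt (p ++ [r]) i = stateAt p i + (r.1 - finalState p) := by
  rw [stateAt, List.take_append_of_le_length hi, minInit_append_singleton,
    finalFrom_take_eq_stateAt_add (le_add_right le_rfl), add_tsub_cancel_left]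

theorem semiformal_append_singleton_iff {p : Pathway σ} {r : Reaction σ} :
    Semiformal fm (p ++ [r]) ↔ Semiformal fm p ∧ intermediatePart fm r.1 ≤ finalState p := by
  rw [Semiformal, minInit_append_singleton, formalState_add_iff, formalState_sub_iff,
    Semiformal]

theorem Interleave.minInit_le {q₁ q₂ p : Pathway σ} (h : Interleave q₁ q₂ p) :
    minInit p ≤ minInit q₁ + minInit q₂ := by
  induction h with
  | nil => simp [minInit]
  | @left a l₁ l₂ l _ ih =>
    change a.1 + (minInit l - a.2) ≤ a.1 + (minInit l₁ - a.2) + minInit l₂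
    rw [add_assoc]
    refine add_le_add_right ?_ _
    rw [tsub_le_iff_right, add_right_comm]
    exact ih.trans (add_le_add_left le_tsub_add _)
  | @right a l₁ l₂ l _ ih =>
    change a.1 + (minInit l - a.2) ≤ minInit l₁ + (a.1 + (minInit l₂ - a.2))
    rw [add_left_comm]
    refine add_le_add_right ?_ _
    rw [tsub_le_iff_right, add_assoc]
    exact ih.trans (add_le_add_right le_tsub_add _)

theorem Interleave.finalFrom_add {q₁ q₂ p : Pathway σ} (h : Interleave q₁ q₂ p)
    {S₁ S₂ : State σ} (h₁ : minInit q₁ ≤ S₁) (h₂ : minInit q₂ ≤ S₂) :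
    finalFrom (S₁ + S₂) p = finalFrom S₁ q₁ + finalFrom S₂ q₂ := by
  induction h generalizing S₁ S₂ with
  | nil => rfl
  | @left a l₁ l₂ l _ ih =>
    change finalFrom (applyRxn (S₁ + S₂) a) l = finalFrom (applyRxn S₁ a) l₁ + finalFrom S₂ l₂
    rw [applyRxn_add _ (le_of_minInit_cons_le h₁)]
    exact ih (minInit_le_applyRxn_of_minInit_cons_le h₁) h₂
  | @right a l₁ l₂ l _ ih =>
    change finalFrom (applyRxn (S₁ + S₂) a) l = finalFrom S₁ l₁ + finalFrom (applyRxn S₂ a) l₂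
    rw [add_comm S₁, applyRxn_add _ (le_of_minInit_cons_le h₂), add_comm]
    exact ih h₁ (minInit_le_applyRxn_of_minInit_cons_le h₂)

theorem InterleaveMany.minInit_le_sum {qs : List (Pathway σ)} {p : Pathway σ}
    (h : InterleaveMany qs p) : minInit p ≤ (qs.map minInit).sum := by
  induction h with
  | nil => simp [minInit]
  | cons hi _ ih =>
    rw [List.map_cons, List.sum_cons]
    exact hi.minInit_le.trans (add_le_add_right ih _)

theorem InterleaveMany.finalFrom_sum_minInit {qs : List (Pathway σ)} {p : Pathway σ}
    (h : InterleaveMany qs p) : finalFrom (qs.map minInit).sum p = (qs.map finalState).sum := by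
  induction h with
  | nil => rfl
  | cons hi hr ih =>
    simp only [List.map_cons, List.sum_cons]
    rw [hi.finalFrom_add le_rfl hr.minInit_le_sum, ih, finalState]

theorem InterleaveMany.sum_finalState {qs : List (Pathway σ)} {p : Pathway σ}
    (h : InterleaveMany qs p) :
    (qs.map finalState).sum = finalState p + ((qs.map minInit).sum - minInit p) := by
  rw [← h.finalFrom_sum_minInit, finalFrom_eq_finalState_add h.minInit_le_sum]

theorem formalState_sum_minInit {qs : List (Pathway σ)} (h : ∀ q ∈ qs, Semiformal fm q) :
    FormalState fm (qs.map minInit).sum := by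
  induction qs with
  | nil => intro x hx; simp at hx
  | cons q qs ih =>
    rw [List.map_cons, List.sum_cons, formalState_add_iff]
    exact ⟨h q List.mem_cons_self, ih fun q' hq' => h q' (List.mem_cons_of_mem q hq')⟩

theorem InterleaveMany.semiformal {qs : List (Pathway σ)} {p : Pathway σ}
    (h : InterleaveMany qs p) (hqs : ∀ q ∈ qs, Semiformal fm q) : Semiformal fm p :=
  (formalState_sum_minInit hqs).mono h.minInit_le_sum

theorem InterleaveMany.intermediatePart_le_sum_finalState_iff {qs : List (Pathway σ)}
    {p : Pathway σ} (h : InterleaveMany qs p) (hqs : ∀ q ∈ qs, Semiformal fm q) (S : State σ) :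
    intermediatePart fm S ≤ (qs.map finalState).sum ↔ intermediatePart fm S ≤ finalState p := by
  rw [h.sum_finalState]
  exact ⟨fun hS => intermediatePart_le_of_le_add hS
    ((formalState_sum_minInit hqs).mono tsub_le_self), fun hS => hS.trans le_self_add⟩

theorem card_stateAt_le_width (p : Pathway σ) (i : ℕ) :
    Multiset.card (stateAt p i) ≤ width p := by
  rcases le_or_gt i p.length with h | h
  · exact List.le_max_of_le (List.mem_map_of_mem (List.mem_range.2 (by omega))) le_rfl
  · rw [stateAt_of_length_le h.le, ← stateAt_of_length_le le_rfl]
    exact List.le_max_of_le (List.mem_map_of_mem (List.mem_range.2 (by omega))) le_rfl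

theorem width_le {p : Pathway σ} {W : ℕ} (h : ∀ i, Multiset.card (stateAt p i) ≤ W) :
    width p ≤ W :=
  List.max_le_of_forall_le _ _ (by simpa using fun i _ => h i)

theorem width_nil : width ([] : Pathway σ) = 0 :=
  Nat.eq_zero_of_le_zero (width_le fun _ => by simp [stateAt, minInit, finalFrom])

theorem Interleave.width_le {q₁ q₂ p : Pathway σ} (h : Interleave q₁ q₂ p) :
    width p ≤ width q₁ + width q₂ := by
  refine CRNVerif.width_le fun i => ?_
  obtain ⟨i₁, i₂, hi⟩ := h.exists_take i
  have hstate : stateAt p i + (minInit q₁ + minInit q₂ - minInit p)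
      = stateAt q₁ i₁ + stateAt q₂ i₂ := by
    rw [← finalFrom_take_eq_stateAt_add h.minInit_le]
    exact hi.finalFrom_add (minInit_take_le _ _) (minInit_take_le _ _)
  calc Multiset.card (stateAt p i)
      ≤ Multiset.card (stateAt q₁ i₁ + stateAt q₂ i₂) := by
        rw [← hstate, Multiset.card_add]; exact Nat.le_add_right _ _
    _ ≤ width q₁ + width q₂ := by
        rw [Multiset.card_add]
        exact add_le_add (card_stateAt_le_width _ _) (card_stateAt_le_width _ _)

theorem InterleaveMany.width_le_sum {qs : List (Pathway σ)} {p : Pathway σ}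
    (h : InterleaveMany qs p) : width p ≤ (qs.map width).sum := by
  induction h with
  | nil => simp [width_nil]
  | cons hi _ ih =>
    rw [List.map_cons, List.sum_cons]
    exact hi.width_le.trans (add_le_add_right ih _)

theorem width_append_singleton_le (p : Pathway σ) (r : Reaction σ) :
    width (p ++ [r]) ≤ width p + max (Multiset.card r.1) (Multiset.card r.2) := by
  refine width_le fun i => ?_
  rcases le_or_gt i p.length with hi | hi
  · rw [stateAt_append_singleton_of_le r hi, Multiset.card_add]
    have := card_stateAt_le_width p i
    have := Multiset.card_le_card (tsub_le_self : r.1 - finalState p ≤ r.1)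
    have := le_max_left (Multiset.card r.1) (Multiset.card r.2)
    omega
  · rw [stateAt_of_length_le (by simpa using hi), finalState_append_singleton, applyRxn,
      Multiset.card_add]
    have := card_stateAt_le_width p p.length
    rw [stateAt_of_length_le le_rfl] at this
    have := Multiset.card_le_card (tsub_le_self : finalState p - r.1 ≤ finalState p)
    have := le_max_right (Multiset.card r.1) (Multiset.card r.2)
    omega

theorem exists_interleaveMany_undecomposable {p : Pathway σ} (hp : Semiformal fm p) :
    ∃ qs, InterleaveMany qs p ∧ ∀ q ∈ qs, q ≠ [] ∧ Semiformal fm q ∧ ¬ SDecomposable fm q := by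
  induction hn : p.length using Nat.strong_induction_on generalizing p with
  | _ n ih =>
  by_cases hd : SDecomposable fm p
  · obtain ⟨q₁, q₂, hq₁, hq₂, hi, hs₁, hs₂⟩ := hd
    have hlen := hi.length_eq
    have := List.length_pos_iff.2 hq₁
    have := List.length_pos_iff.2 hq₂
    obtain ⟨qs₁, hqs₁, hc₁⟩ := ih q₁.length (by omega) hs₁ rfl
    obtain ⟨qs₂, hqs₂, hc₂⟩ := ih q₂.length (by omega) hs₂ rfl
    refine ⟨qs₁ ++ qs₂, hqs₁.append hqs₂ hi, fun q hq => ?_⟩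
    exact (List.mem_append.1 hq).elim (hc₁ q) (hc₂ q)
  · rcases eq_or_ne p [] with rfl | hne
    · exact ⟨[], .nil, by simp⟩
    · exact ⟨[p], .cons (interleave_nil_left p).symm .nil, by simpa using ⟨hne, hp, hd⟩⟩

theorem length_le_card_intermediatePart {p : Pathway σ} {r : Reaction σ}
    (hs : Semiformal fm (p ++ [r])) (hd : ¬ SDecomposable fm (p ++ [r]))
    {qs : List (Pathway σ)} (hqs : InterleaveMany qs p)
    (hc : ∀ q ∈ qs, q ≠ [] ∧ Semiformal fm q) :
    qs.length ≤ Multiset.card (intermediatePart fm r.1) := by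
  have hsf : ∀ q ∈ qs, Semiformal fm q := fun q hq => (hc q hq).2
  refine Multiset.card_le_card_of_forall_not_le_sum_map_erase finalState
    (S := (qs : Multiset (Pathway σ))) ?_ ?_
  · rw [Multiset.map_coe, Multiset.sum_coe, hqs.intermediatePart_le_sum_finalState_iff hsf]
    exact (semiformal_append_singleton_iff.1 hs).2
  · intro q hq hle
    obtain ⟨qs₁, qs₂, rfl⟩ := List.mem_iff_append.1 (Multiset.mem_coe.1 hq)
    obtain ⟨rest, hi, hrest⟩ := hqs.exists_interleave_of_eq_append
    have hsf' : ∀ q' ∈ qs₁ ++ qs₂, Semiformal fm q' := fun q' hq' =>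
      hsf q' (((List.sublist_cons_self q qs₂).append_left qs₁).subset hq')
    rw [Multiset.coe_eq_coe.2 List.perm_middle, ← Multiset.cons_coe, Multiset.erase_cons_head,
      Multiset.map_coe, Multiset.sum_coe, hrest.intermediatePart_le_sum_finalState_iff hsf'] at hle
    exact hd ⟨q, rest ++ [r], (hc q hq).1, by simp, hi.append_singleton r, (hc q hq).2,
      semiformal_append_singleton_iff.2 ⟨hrest.semiformal hsf', hle⟩⟩

end Pathways

theorem no_large_width_undecomposable_general {σ : Type} [DecidableEq σ] (fm : σ → Bool)
    (C : Finset (Reaction σ)) (w wmax : ℕ)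
    (hb : (w + 1) * branching C ≤ wmax)
    (hno : ∀ p : Pathway σ, PathwayOf C p → Semiformal fm p → ¬ SDecomposable fm p →
      w < width p → width p ≤ wmax → False) :
    ∀ p : Pathway σ, PathwayOf C p → Semiformal fm p → ¬ SDecomposable fm p →
      width p ≤ w := by
  intro p
  induction hn : p.length using Nat.strong_induction_on generalizing p with
  | _ n ih =>
  intro hp hs hd
  obtain rfl | ⟨p, r, rfl⟩ := List.eq_nil_or_concat' p
  · simp [width_nil]
  have hr := max_card_le_branching (hp r (by simp))
  obtain ⟨qs, hqs, hc⟩ :=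
    exists_interleaveMany_undecomposable (semiformal_append_singleton_iff.1 hs).1
  have hwidth : ∀ q ∈ qs, width q ≤ w := fun q hq =>
    ih q.length (by simpa [← hn] using Nat.lt_succ_of_le (hqs.length_le hq)) q rfl
      (fun a ha => hp a (List.mem_append_left _ (hqs.subset hq ha))) (hc q hq).2.1 (hc q hq).2.2
  have hlen : qs.length ≤ branching C :=
    (length_le_card_intermediatePart hs hd hqs fun q hq => ⟨(hc q hq).1, (hc q hq).2.1⟩).trans
      ((card_intermediatePart_le r.1).trans ((le_max_left _ _).trans hr))
  have hmax : width (p ++ [r]) ≤ wmax :=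
    calc width (p ++ [r]) ≤ width p + branching C := (width_append_singleton_le p r).trans
          (add_le_add_right hr _)
      _ ≤ qs.length * w + branching C := by
          gcongr
          simpa using hqs.width_le_sum.trans (List.sum_le_card_nsmul _ w (by simpa using hwidth))
      _ ≤ wmax := by nlinarith
  by_contra hgt
  exact hno _ hp hs hd (not_le.1 hgt) hmax

/-- If `(w+1)·b ≤ w_max` and there is no undecomposable semiformal pathway of width
in `(w, w_max]`, then there is none of width `> w` at all. -/
theorem no_large_width_undecomposable {σ : Type} [DecidableEq σ] (fm : σ → Bool)
    (C : Finset (Reaction σ)) (hC : NontrivialRxns C) (w wmax : ℕ)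
    (hb : (w + 1) * branching C ≤ wmax)
    (hno : ∀ p : Pathway σ, PathwayOf C p → Semiformal fm p → ¬ SDecomposable fm p →
      w < width p → width p ≤ wmax → False) :
    ∀ p : Pathway σ, PathwayOf C p → Semiformal fm p → ¬ SDecomposable fm p →
      width p ≤ w :=
  no_large_width_undecomposable_general fm C w wmax hb hno

end CRNVerif
end

section
/- A prime formal pathway is regular if and only if its RFS contains its final state. -/
namespace CRNVerif

variable {σ : Type} [DecidableEq σ]

/-! The final state of a formal pathway is the formal part of its last state, so it always lies
below `rfsAt fm p j`; equality with `rfsAt fm p j` therefore says exactly that every state after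
the candidate turning point `j` has its formal part inside the final state. -/

theorem foldr_union_le_iff {l : List (Multiset σ)} {T : Multiset σ} :
    l.foldr (· ∪ ·) 0 ≤ T ↔ ∀ a ∈ l, a ≤ T := by
  induction l with
  | nil => simp
  | cons a l ih =>
    simp only [List.foldr_cons, List.mem_cons, forall_eq_or_imp, ← ih]
    exact Multiset.union_le_iff

theorem le_foldr_union {l : List (Multiset σ)} {a : Multiset σ} (h : a ∈ l) :
    a ≤ l.foldr (· ∪ ·) 0 :=
  foldr_union_le_iff.1 le_rfl a h

theorem mem_filter_range_iff {j i n : ℕ} :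
    i ∈ (List.range (n + 1)).filter (fun i => j < i) ↔ j < i ∧ i ≤ n := by
  simp [and_comm]

theorem rfsAt_le_iff (fm : σ → Bool) (p : Pathway σ) (j : ℕ) (T : State σ) :
    rfsAt fm p j ≤ T ↔ ∀ i, j < i → i ≤ p.length → formalPart fm (stateAt p i) ≤ T := by
  simp only [rfsAt, foldr_union_le_iff, List.forall_mem_map, mem_filter_range_iff, and_imp]

theorem stateAt_length (p : Pathway σ) : stateAt p p.length = finalState p := by
  simp [stateAt, finalState]

theorem formalPart_finalState_le_rfsAt (fm : σ → Bool) (p : Pathway σ) {j : ℕ}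
    (hj : j < p.length) : formalPart fm (finalState p) ≤ rfsAt fm p j := by
  rw [← stateAt_length]
  exact le_foldr_union (List.mem_map_of_mem (mem_filter_range_iff.2 ⟨hj, le_rfl⟩))

theorem finalState_eq_rfsAt_iff {fm : σ → Bool} {p : Pathway σ} {j : ℕ}
    (hT : FormalState fm (finalState p)) (hj : j < p.length) :
    finalState p = rfsAt fm p j ↔
      ∀ i, j < i → i ≤ p.length → formalPart fm (stateAt p i) ≤ finalState p := by
  rw [← rfsAt_le_iff]
  refine ⟨fun h => h.ge, fun h => le_antisymm ?_ h⟩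
  simpa only [formalPart, Multiset.filter_eq_self.2 hT] using formalPart_finalState_le_rfsAt fm p hj

/-- A prime formal pathway is regular iff its RFS contains its final state. -/
theorem prime_regular_iff_final_mem_rfs {σ : Type} [DecidableEq σ] (fm : σ → Bool)
    (p : Pathway σ) (hp : PrimePathway fm p) :
    RegularPathway fm p ↔ finalState p ∈ RFS fm p := by
  have hT : FormalState fm (finalState p) := hp.1.2.2
  constructor
  · rintro ⟨-, j, hj, hbefore, hafter, hzero⟩
    exact ⟨j, hj, hbefore, hzero, (finalState_eq_rfsAt_iff hT hj).2 hafter⟩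
  · rintro ⟨j, hj, hbefore, hzero, hrfs⟩
    exact ⟨hp.1, j, hj, hbefore, (finalState_eq_rfsAt_iff hT hj).1 hrfs, hzero⟩

end CRNVerif
end
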